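/- Let (μ_n)_{n≥1} be a sequence of probability measures on ℝ, each with infinite support and all moments finite, and let x* ∈ ℝ. If (μ_n) satisfies the α-Nevai condition at x* for some α > 0, then (μ_n) satisfies the Nevai condition at x*, i.e. for every continuous compactly supported f : ℝ → ℝ, ∫ (f(y) − f(x*)) K_n(x*,y)²/K_n(x*,x*) dμ_n(y) → 0 as n → ∞. -/

import Mathlib

open MeasureTheory ProbabilityTheory Filter Topology

noncomputable section

/-- The squared Vandermonde determinant `∏_{i>j} (λ_i - λ_j)^2`. -/
def vandSq {n : ℕ} (l : Fin n → ℝ) : ℝ :=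
  ∏ q ∈ Finset.univ.filter (fun q : Fin n × Fin n => q.2 < q.1), (l q.1 - l q.2) ^ 2

/-- The orthogonal polynomial ensemble of size `n` associated with `μ`: the probability
measure on `ℝ^n` proportional to `∏_{i>j}(λ_i-λ_j)^2 dμ(λ_1)⋯dμ(λ_n)`. -/
def OPE (μ : Measure ℝ) (n : ℕ) : Measure (Fin n → ℝ) :=
  ((((Measure.pi fun _ : Fin n => μ).withDensity fun l => ENNReal.ofReal (vandSq l))
    Set.univ)⁻¹) •
    ((Measure.pi fun _ : Fin n => μ).withDensity fun l => ENNReal.ofReal (vandSq l))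

/-- The linear statistic `X_f = ∑ f(λ_j)`. -/
def linStat {n : ℕ} (f : ℝ → ℝ) (l : Fin n → ℝ) : ℝ := ∑ j, f (l j)

/-- The scaled linear statistic `X_{f,α,x*} = ∑ f(n^α (λ_j - x*))`. -/
def scaledLinStat {n : ℕ} (f : ℝ → ℝ) (α xs : ℝ) (l : Fin n → ℝ) : ℝ :=
  ∑ j, f ((n : ℝ) ^ α * (l j - xs))

/-- `p` is the family of orthonormal polynomials of `μ`: `p j` has degree `j`, positive
leading coefficient, and `∫ p_i p_j dμ = δ_{ij}`. -/
def IsOrthonormalPolys (μ : Measure ℝ) (p : ℕ → Polynomial ℝ) : Prop :=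
  (∀ j, (p j).degree = (j : WithBot ℕ)) ∧ (∀ j, 0 < (p j).leadingCoeff) ∧
    ∀ i j, ∫ x, (p i).eval x * (p j).eval x ∂μ = if i = j then 1 else 0

/-- All moments of `μ` are finite. -/
def HasAllMoments (μ : Measure ℝ) : Prop := ∀ k : ℕ, Integrable (fun x : ℝ => x ^ k) μ

/-- `μ` has infinite support: no finite set carries full `μ`-measure. -/
def InfiniteSupport (μ : Measure ℝ) : Prop := ∀ s : Finset ℝ, μ ((↑s : Set ℝ)ᶜ) ≠ 0

/-- The Christoffel–Darboux kernel `K_n(x,y) = ∑_{j<n} p_j(x) p_j(y)`. -/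
def CDKernel (p : ℕ → Polynomial ℝ) (n : ℕ) (x y : ℝ) : ℝ :=
  ∑ j ∈ Finset.range n, (p j).eval x * (p j).eval y

/-- The sup norm `‖f‖_∞` of a (bounded) function. -/
def supNorm (f : ℝ → ℝ) : ℝ := ⨆ x, |f x|

/-- The (topological) support of a measure on `ℝ`. -/
def measSupport (μ : Measure ℝ) : Set ℝ := {x | ∀ U ∈ 𝓝 x, μ U ≠ 0}

/-- The sine kernel `sin(πt)/(πt)` (equal to `1` at `t = 0`). -/
def sineKernel (t : ℝ) : ℝ := if t = 0 then 1 else Real.sin (Real.pi * t) / (Real.pi * t)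

/-- `K̃_n(x,y) = w(x)^{1/2} w(y)^{1/2} K_n(x,y)`, where `w` is the Radon–Nikodym
derivative of `μ` with respect to Lebesgue measure. -/
def tildeK (μ : Measure ℝ) (Kf : ℝ → ℝ → ℝ) (x y : ℝ) : ℝ :=
  Real.sqrt ((μ.rnDeriv volume x).toReal) * Real.sqrt ((μ.rnDeriv volume y).toReal) * Kf x y

/-- The Nevai condition at `x*` for a sequence of measures with kernels `Kf n`. -/
def NevaiCond (μ : ℕ → Measure ℝ) (Kf : ℕ → ℝ → ℝ → ℝ) (xs : ℝ) : Prop :=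
  ∀ f : ℝ → ℝ, Continuous f → HasCompactSupport f →
    Tendsto (fun n => ∫ y, (f y - f xs) * Kf n xs y ^ 2 / Kf n xs xs ∂(μ n)) atTop (𝓝 0)

/-- The `α`-Nevai condition at `x*` for a sequence of measures with kernels `Kf n`. -/
def AlphaNevaiCond (μ : ℕ → Measure ℝ) (Kf : ℕ → ℝ → ℝ → ℝ) (α xs : ℝ) : Prop :=
  ∀ f : ℝ → ℝ, Continuous f → HasCompactSupport f →
    ∀ S : Set ℝ, IsCompact S →
      TendstoUniformlyOn
        (fun n s => ∫ y, (f s - f ((n : ℝ) ^ α * (y - xs))) *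
            Kf n (xs + s / (n : ℝ) ^ α) y ^ 2 /
            Kf n (xs + s / (n : ℝ) ^ α) (xs + s / (n : ℝ) ^ α) ∂(μ n))
        (fun _ => 0) atTop S

/-!
The reproducing property `∫ K_n(x*,y)² dμ_n(y) = K_n(x*,x*)` makes
`w_n(y) dμ_n(y) = K_n(x*,y)² / K_n(x*,x*) dμ_n(y)` a measure of mass at most one. The α-Nevai
condition at `s = 0`, tested against a bump `g` with `g(0) = 1`, says that `w_n dμ_n` gives
vanishing mass to the region where `g(n^α (y - x*)) < 1`; since `n^α → ∞`, this region contains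
every fixed `|y - x*| ≥ δ` eventually, so `w_n dμ_n → δ_{x*}` against bounded functions
continuous at `x*`.
-/

namespace IsOrthonormalPolys

variable {μ : Measure ℝ} {p : ℕ → Polynomial ℝ}

lemma memLp_eval (hp : IsOrthonormalPolys μ p) (j : ℕ) :
    MemLp (fun x => (p j).eval x) 2 μ := by
  refine (memLp_two_iff_integrable_sq (p j).continuous.aestronglyMeasurable).2 ?_
  refine Integrable.of_integral_ne_zero ?_
  simp only [sq, hp.2.2 j j]
  exact one_ne_zero

lemma integrable_eval_mul_eval (hp : IsOrthonormalPolys μ p) (i j : ℕ) :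
    Integrable (fun x => (p i).eval x * (p j).eval x) μ :=
  (hp.memLp_eval i).integrable_mul (hp.memLp_eval j)

lemma integrable_sum_sq (hp : IsOrthonormalPolys μ p) (c : ℕ → ℝ) (n : ℕ) :
    Integrable (fun x => (∑ j ∈ Finset.range n, c j * (p j).eval x) ^ 2) μ :=
  (memLp_finsetSum _ fun j _ => (hp.memLp_eval j).const_mul (c j)).integrable_sq

lemma integral_sum_sq (hp : IsOrthonormalPolys μ p) (c : ℕ → ℝ) (n : ℕ) :
    ∫ x, (∑ j ∈ Finset.range n, c j * (p j).eval x) ^ 2 ∂μ = ∑ j ∈ Finset.range n, c j ^ 2 := by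
  have hint : ∀ j k, Integrable (fun x => c j * (p j).eval x * (c k * (p k).eval x)) μ :=
    fun j k => by
      simpa only [mul_mul_mul_comm] using (hp.integrable_eval_mul_eval j k).const_mul (c j * c k)
  simp_rw [sq, Finset.sum_mul_sum]
  rw [integral_finsetSum _ fun j _ => integrable_finsetSum _ fun k _ => hint j k]
  refine Finset.sum_congr rfl fun j hj => ?_
  rw [integral_finsetSum _ fun k _ => hint j k]
  simp_rw [mul_mul_mul_comm, integral_const_mul, hp.2.2 j, mul_ite, mul_one, mul_zero,
    Finset.sum_ite_eq, if_pos hj]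

lemma integrable_CDKernel_sq (hp : IsOrthonormalPolys μ p) (n : ℕ) (x : ℝ) :
    Integrable (fun y => CDKernel p n x y ^ 2) μ :=
  hp.integrable_sum_sq (fun j => (p j).eval x) n

lemma integral_CDKernel_sq (hp : IsOrthonormalPolys μ p) (n : ℕ) (x : ℝ) :
    ∫ y, CDKernel p n x y ^ 2 ∂μ = CDKernel p n x x := by
  rw [CDKernel, ← Finset.sum_congr rfl fun j _ => sq ((p j).eval x)]
  exact hp.integral_sum_sq (fun j => (p j).eval x) n

end IsOrthonormalPolys

lemma CDKernel_self_nonneg (p : ℕ → Polynomial ℝ) (n : ℕ) (x : ℝ) : 0 ≤ CDKernel p n x x :=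
  Finset.sum_nonneg fun _ _ => mul_self_nonneg _

section Concentration

variable {ι : Type*} {l : Filter ι} {μ : ι → Measure ℝ} {w : ι → ℝ → ℝ}
  {f g : ℝ → ℝ} {r : ι → ℝ} {x₀ C : ℝ}

lemma eventually_abs_sub_le_add_mul_one_sub (hf : ContinuousAt f x₀) (hC : ∀ y, |f y| ≤ C)
    (hgc : HasCompactSupport g) (hg1 : ∀ t, g t ≤ 1) (hr : Tendsto r l atTop)
    {ε : ℝ} (hε : 0 < ε) :
    ∀ᶠ i in l, ∀ y, |f y - f x₀| ≤ ε + 2 * C * (1 - g (r i * (y - x₀))) := by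
  obtain ⟨δ, hδ, hfδ⟩ := Metric.continuousAt_iff.1 hf ε hε
  obtain ⟨R, hR, hgR⟩ := hgc.exists_pos_le_norm
  have hC0 : 0 ≤ C := (abs_nonneg _).trans (hC 0)
  filter_upwards [hr.eventually_ge_atTop (R / δ)] with i hi y
  have hri : 0 < r i := (div_pos hR hδ).trans_le hi
  by_cases hy : |y - x₀| < δ
  · have hnear : |f y - f x₀| < ε := by
      simpa only [Real.dist_eq] using hfδ (x := y) (by rwa [Real.dist_eq])
    have := mul_nonneg (mul_nonneg zero_le_two hC0) (sub_nonneg.2 (hg1 (r i * (y - x₀))))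
    linarith
  · have hfar : g (r i * (y - x₀)) = 0 := by
      refine hgR _ ?_
      rw [Real.norm_eq_abs, abs_mul, abs_of_pos hri]
      calc R = R / δ * δ := (div_mul_cancel₀ R hδ.ne').symm
        _ ≤ r i * |y - x₀| := mul_le_mul hi (not_lt.1 hy) hδ.le hri.le
    rw [hfar]
    linarith [abs_sub (f y) (f x₀), hC y, hC x₀]

lemma tendsto_integral_sub_mul_of_tendsto_integral_one_sub
    (hw0 : ∀ i y, 0 ≤ w i y) (hw : ∀ i, Integrable (w i) (μ i)) (hw1 : ∀ i, ∫ y, w i y ∂μ i ≤ 1)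
    (hf : ContinuousAt f x₀) (hC : ∀ y, |f y| ≤ C)
    (hg : Continuous g) (hgc : HasCompactSupport g) (hg1 : ∀ t, g t ≤ 1) (hr : Tendsto r l atTop)
    (hconc : Tendsto (fun i => ∫ y, (1 - g (r i * (y - x₀))) * w i y ∂μ i) l (𝓝 0)) :
    Tendsto (fun i => ∫ y, (f y - f x₀) * w i y ∂μ i) l (𝓝 0) := by
  refine Metric.tendsto_nhds.2 fun ε hε => ?_
  obtain ⟨B, hB⟩ := hgc.exists_bound_of_continuous hg
  have hsmall : ∀ᶠ i in l, 2 * C * ∫ y, (1 - g (r i * (y - x₀))) * w i y ∂μ i < ε / 2 := by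
    have h := hconc.const_mul (2 * C)
    rw [mul_zero] at h
    exact h.eventually (gt_mem_nhds (half_pos hε))
  filter_upwards [eventually_abs_sub_le_add_mul_one_sub hf hC hgc hg1 hr
    (half_pos hε), hsmall] with i hbound hi
  have hφ : Integrable (fun y => (1 - g (r i * (y - x₀))) * w i y) (μ i) := by
    refine (hw i).bdd_mul (c := 1 + B) (by fun_prop) (ae_of_all _ fun y => ?_)
    exact (norm_sub_le _ _).trans (by simpa using hB _)
  have hsplit : (fun y => (ε / 2 + 2 * C * (1 - g (r i * (y - x₀)))) * w i y) =
      fun y => ε / 2 * w i y + 2 * C * ((1 - g (r i * (y - x₀))) * w i y) := by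
    funext y; ring
  rw [Real.dist_0_eq_abs]
  calc |∫ y, (f y - f x₀) * w i y ∂μ i| ≤ ∫ y, |f y - f x₀| * w i y ∂μ i := by
        refine (abs_integral_le_integral_abs).trans_eq (integral_congr_ae (ae_of_all _ fun y => ?_))
        simp only [abs_mul, abs_of_nonneg (hw0 i y)]
    _ ≤ ∫ y, (ε / 2 + 2 * C * (1 - g (r i * (y - x₀)))) * w i y ∂μ i := by
        refine integral_mono_of_nonneg (ae_of_all _ fun y => mul_nonneg (abs_nonneg _) (hw0 i y))
          ?_ (ae_of_all _ fun y => mul_le_mul_of_nonneg_right (hbound y) (hw0 i y))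
        rw [hsplit]
        exact ((hw i).const_mul _).add (hφ.const_mul _)
    _ = ε / 2 * ∫ y, w i y ∂μ i + 2 * C * ∫ y, (1 - g (r i * (y - x₀))) * w i y ∂μ i := by
        rw [hsplit, integral_add ((hw i).const_mul _) (hφ.const_mul _), integral_const_mul,
          integral_const_mul]
    _ < ε := by nlinarith [hw1 i]

end Concentration

lemma AlphaNevaiCond.tendsto_integral_at_center {μ : ℕ → Measure ℝ} {Kf : ℕ → ℝ → ℝ → ℝ}
    {α xs : ℝ} (h : AlphaNevaiCond μ Kf α xs) {g : ℝ → ℝ} (hg : Continuous g)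
    (hgc : HasCompactSupport g) :
    Tendsto (fun n => ∫ y, (g 0 - g ((n : ℝ) ^ α * (y - xs))) * Kf n xs y ^ 2 / Kf n xs xs ∂μ n)
      atTop (𝓝 0) := by
  simpa using (h g hg hgc {0} isCompact_singleton).tendsto_at rfl

theorem alphaNevai_implies_Nevai_general
    (μ : ℕ → Measure ℝ)
    (p : ℕ → ℕ → Polynomial ℝ) (hp : ∀ n, IsOrthonormalPolys (μ n) (p n))
    (xs : ℝ) (α : ℝ) (hα : 0 < α)
    (hNevai : AlphaNevaiCond μ (fun n => CDKernel (p n) n) α xs) :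
    NevaiCond μ (fun n => CDKernel (p n) n) xs := by
  intro f hf hfc
  obtain ⟨C, hC⟩ := hfc.exists_bound_of_continuous hf
  let g : ContDiffBump (0 : ℝ) := ⟨1, 2, one_pos, one_lt_two⟩
  have hg0 : g 0 = 1 := g.one_of_mem_closedBall (Metric.mem_closedBall_self zero_le_one)
  have hconc := hNevai.tendsto_integral_at_center g.continuous g.hasCompactSupport
  simp only [hg0, mul_div_assoc] at hconc ⊢
  exact tendsto_integral_sub_mul_of_tendsto_integral_one_sub
    (fun _ _ => div_nonneg (sq_nonneg _) (CDKernel_self_nonneg _ _ _))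
    (fun n => ((hp n).integrable_CDKernel_sq n xs).div_const _)
    (fun n => by rw [integral_div, (hp n).integral_CDKernel_sq]; exact div_self_le_one _)
    hf.continuousAt (by simpa using hC) g.continuous g.hasCompactSupport (fun _ => g.le_one)
    ((tendsto_rpow_atTop hα).comp tendsto_natCast_atTop_atTop) hconc

/-- **α-Nevai implies Nevai** (Proposition 5.2): if a sequence of measures satisfies the
`α`-Nevai condition at `x*` for some `α > 0`, then it satisfies the Nevai condition at
`x*`. -/
theorem alphaNevai_implies_Nevai
    (μ : ℕ → Measure ℝ) (hprob : ∀ n, IsProbabilityMeasure (μ n))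
    (hinf : ∀ n, InfiniteSupport (μ n)) (hmom : ∀ n, HasAllMoments (μ n))
    (p : ℕ → ℕ → Polynomial ℝ) (hp : ∀ n, IsOrthonormalPolys (μ n) (p n))
    (xs : ℝ) (α : ℝ) (hα : 0 < α)
    (hNevai : AlphaNevaiCond μ (fun n => CDKernel (p n) n) α xs) :
    NevaiCond μ (fun n => CDKernel (p n) n) xs :=
  alphaNevai_implies_Nevai_general μ p hp xs α hα hNevai
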